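/- arXiv:1706.04135 — 2 statements merged into one kernel-verified Lean document; each statement's English description precedes it below -/
import Mathlib

section
/- The shrinking Cantor fan F_{C_ω} is 1/3-homogeneous. -/
open Set Filter Topology Metric

namespace FansHomogeneity

/-- `A` is an arc in `X` with endpoints `p` and `q`. -/
def IsArcWith {X : Type*} [TopologicalSpace X] (A : Set X) (p q : X) : Prop :=
  ∃ h : unitInterval ≃ₜ A, (h 0 : X) = p ∧ (h 1 : X) = q

/-- `A` is the (possibly degenerate) arc with endpoints `p` and `q`:
either `p = q` and `A = {p}`, or `A` is an arc from `p` to `q`. -/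
def IsArcOrPt {X : Type*} [TopologicalSpace X] (A : Set X) (p q : X) : Prop :=
  (p = q ∧ A = {p}) ∨ IsArcWith A p q

/-- A subcontinuum of a space: a nonempty compact connected subset. -/
def IsSubcontinuum {X : Type*} [TopologicalSpace X] (A : Set X) : Prop :=
  IsCompact A ∧ IsConnected A

/-- A space is hereditarily unicoherent if the intersection of any two subcontinua
is connected. -/
def HereditarilyUnicoherent (X : Type*) [TopologicalSpace X] : Prop :=
  ∀ A B : Set X, IsSubcontinuum A → IsSubcontinuum B → IsPreconnected (A ∩ B)

/-- A space is arcwise connected if any two distinct points are the endpoints of an arc. -/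
def ArcwiseConnected (X : Type*) [TopologicalSpace X] : Prop :=
  ∀ p q : X, p ≠ q → ∃ A : Set X, IsArcWith A p q

/-- A dendroid: an arcwise connected, hereditarily unicoherent continuum
(nonempty compact connected metric space). -/
def IsDendroid (X : Type*) [MetricSpace X] : Prop :=
  CompactSpace X ∧ ConnectedSpace X ∧ ArcwiseConnected X ∧ HereditarilyUnicoherent X

/-- `p` has order at least `n`: `p` is a common endpoint of `n` arcs in `X` which
pairwise intersect only in `p`. -/
def OrderGe (X : Type*) [TopologicalSpace X] (p : X) (n : ℕ) : Prop :=
  ∃ F : Fin n → Set X, (∀ i, ∃ q : X, IsArcWith (F i) p q) ∧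
    ∀ i j, i ≠ j → F i ∩ F j = {p}

/-- The endpoints of `X`: points of order exactly `1`. -/
def endpoints (X : Type*) [TopologicalSpace X] : Set X :=
  {p | OrderGe X p 1 ∧ ¬ OrderGe X p 2}

/-- The ordinary points of `X`: points of order exactly `2`. -/
def ordinaryPoints (X : Type*) [TopologicalSpace X] : Set X :=
  {p | OrderGe X p 2 ∧ ¬ OrderGe X p 3}

/-- The ramification points of `X`: points of order greater than `2`. -/
def ramificationPoints (X : Type*) [TopologicalSpace X] : Set X :=
  {p | OrderGe X p 3}

/-- A fan with top `t`: a dendroid whose unique ramification point is `t`. -/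
def IsFanWithTop (X : Type*) [MetricSpace X] (t : X) : Prop :=
  IsDendroid X ∧ ramificationPoints X = {t}

/-- A fan: a dendroid with exactly one ramification point. -/
def IsFan (X : Type*) [MetricSpace X] : Prop :=
  ∃ t : X, IsFanWithTop X t

/-- The orbit of a point under the action of the homeomorphism group of `X`. -/
def orbit (X : Type*) [TopologicalSpace X] (x : X) : Set X :=
  {y | ∃ h : X ≃ₜ X, h x = y}

/-- `A` is an orbit of the action of the homeomorphism group of `X` on `X`. -/
def IsOrbit (X : Type*) [TopologicalSpace X] (A : Set X) : Prop :=
  ∃ x : X, A = orbit X x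

/-- The set of orbits of the action of the homeomorphism group of `X` on `X`. -/
def orbits (X : Type*) [TopologicalSpace X] : Set (Set X) :=
  {A | IsOrbit X A}

/-- `X` is `1/n`-homogeneous (has homogeneity degree `n`): the action of the
homeomorphism group of `X` on `X` has exactly `n` orbits. -/
def OneOverHomogeneous (X : Type*) [TopologicalSpace X] (n : ℕ) : Prop :=
  (orbits X).ncard = n

/-- A fan `X` with top `t` is smooth at `t` with respect to `a` if for every sequence
converging to `a` the arcs from `t` converge, in the Hausdorff metric, to the arc `t a`. -/
def SmoothAt (X : Type*) [MetricSpace X] (t a : X) : Prop :=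
  ∀ (α : ℕ → X) (A : ℕ → Set X) (B : Set X),
    Tendsto α atTop (nhds a) → (∀ n, IsArcOrPt (A n) t (α n)) → IsArcOrPt B t a →
    Tendsto (fun n => hausdorffDist (A n) B) atTop (nhds 0)

/-- `S(X)`: the set of points `a` such that `X` is smooth at the top `t` with respect to `a`. -/
def smoothSet (X : Type*) [MetricSpace X] (t : X) : Set X :=
  {a | SmoothAt X t a}

/-- A smooth fan with top `t`. -/
def IsSmoothFanWithTop (X : Type*) [MetricSpace X] (t : X) : Prop :=
  IsFanWithTop X t ∧ smoothSet X t = univ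

/-- A smooth fan. -/
def IsSmoothFan (X : Type*) [MetricSpace X] : Prop :=
  ∃ t : X, IsSmoothFanWithTop X t

/-- The relation on `cantorSet × [0,1]` generating the identification of
`cantorSet × {1}` to a point. -/
def cantorFanRel (a b : ↥cantorSet × unitInterval) : Prop :=
  a.2 = 1 ∧ b.2 = 1

/-- The Cantor fan: the quotient `(C × [0,1]) / (C × {1})` where `C` is the
middle-thirds Cantor set. -/
def CantorFan : Type := Quot cantorFanRel

instance : TopologicalSpace CantorFan :=
  instTopologicalSpaceQuot

/-- The fan `F_ω ⊆ ℝ²`: the union of the segments from `(0,0)` to `(1/i, 1/i²)`, `i ≥ 1`. -/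
def Fomega : Set (ℝ × ℝ) :=
  ⋃ i : ℕ, segment ℝ ((0, 0) : ℝ × ℝ) ((1 / ((i : ℝ) + 1), 1 / ((i : ℝ) + 1) ^ 2) : ℝ × ℝ)

/-- The shrinking Cantor fan `F_{C_ω} ⊆ ℝ²`: for each `i ≥ 1` the union of the segments
from the origin to `(c, 1/2^(i-1))` for `c ∈ C ∩ [(3^(i-1)-1)/3^(i-1), (3^i-2)/3^i]`
(here indexed by `i - 1 ∈ ℕ`). -/
def shrinkingCantorFan : Set (ℝ × ℝ) :=
  ⋃ i : ℕ, ⋃ c ∈ cantorSet ∩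
      Icc (((3 : ℝ) ^ i - 1) / 3 ^ i) (((3 : ℝ) ^ (i + 1) - 2) / 3 ^ (i + 1)),
    segment ℝ ((0, 0) : ℝ × ℝ) ((c, (1 / 2 : ℝ) ^ i) : ℝ × ℝ)

/-- `S` is a simple `n`-od in the plane: the union of `n` straight line segments
which pairwise intersect exactly in a common endpoint. -/
def IsSimpleNod (n : ℕ) (S : Set (ℝ × ℝ)) : Prop :=
  ∃ (o : ℝ × ℝ) (b : Fin n → ℝ × ℝ),
    (∀ i, b i ≠ o) ∧
    S = ⋃ i, segment ℝ o (b i) ∧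
    ∀ i j, i ≠ j → segment ℝ o (b i) ∩ segment ℝ o (b j) = {o}

/-- `X` is colocally connected at `p`: every neighborhood of `p` contains a
neighborhood `V` of `p` such that `X - V` is connected. -/
def ColocallyConnectedAt (X : Type*) [TopologicalSpace X] (p : X) : Prop :=
  ∀ U ∈ nhds p, ∃ V ∈ nhds p, V ⊆ U ∧ IsPreconnected Vᶜ

/-- `X` is homeomorphic to the Lelek fan, i.e. to a smooth fan whose set of
endpoints is dense in it. -/
def HomeoToLelekFan (X : Type*) [TopologicalSpace X] : Prop :=
  ∃ (Y : Type) (m : MetricSpace Y),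
    @IsSmoothFan Y m ∧
    @Dense Y (@UniformSpace.toTopologicalSpace Y
        (@PseudoMetricSpace.toUniformSpace Y m.toPseudoMetricSpace))
      (@endpoints Y (@UniformSpace.toTopologicalSpace Y
        (@PseudoMetricSpace.toUniformSpace Y m.toPseudoMetricSpace))) ∧
    Nonempty (@Homeomorph X Y _ (@UniformSpace.toTopologicalSpace Y
        (@PseudoMetricSpace.toUniformSpace Y m.toPseudoMetricSpace)))

/-!
Away from the vertex, every point of the fan is `t • tip b` for a unique blade label
`b = (i, c)`, `c` in the `i`-th piece of the Cantor set, and a unique `t ∈ (0, 1]`; these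
coordinates are continuous because the blades over different pieces are separated by open
cones. The labels form a copy of `ℕ × C`, which is homogeneous, so the maps
`t • tip b ↦ t ^ α • tip (Ψ b)` are homeomorphisms acting transitively on the tips (`t = 1`)
and on the interior points of blades (`0 < t < 1`). These two classes and the vertex are
separated by their order: the labels are totally disconnected, so a preconnected set avoiding
the vertex lies on one blade and an arc leaving a point of a blade starts along that blade.
Hence tips have order one, interior points order two, and the vertex has order at least three.
-/

local notation "𝓕" => shrinkingCantorFan

section GeneralTopology

variable {X Y : Type*} [TopologicalSpace X] [TopologicalSpace Y]

lemma mem_orbit_self (x : X) : x ∈ orbit X x :=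
  ⟨Homeomorph.refl X, rfl⟩

lemma orbit_eq_of_mem {x y : X} (h : y ∈ orbit X x) : orbit X y = orbit X x := by
  obtain ⟨g, rfl⟩ := h
  ext z
  constructor
  · rintro ⟨g', rfl⟩
    exact ⟨g.trans g', rfl⟩
  · rintro ⟨g', rfl⟩
    exact ⟨g.symm.trans g', by simp⟩

lemma IsArcWith.image_homeomorph {A : Set X} {p q : X} (h : IsArcWith A p q) (e : X ≃ₜ Y) :
    IsArcWith (e '' A) (e p) (e q) := by
  obtain ⟨γ, hγ0, hγ1⟩ := h
  exact ⟨γ.trans (e.image A), by simp [hγ0], by simp [hγ1]⟩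

lemma isArcWith_range [T2Space X] {γ : unitInterval → X} (hγ : Continuous γ)
    (hinj : Function.Injective γ) : IsArcWith (range γ) (γ 0) (γ 1) :=
  ⟨Continuous.homeoOfEquivCompactToT2 (f := Equiv.ofInjective γ hinj) (hγ.subtype_mk _), rfl, rfl⟩

lemma OrderGe.image_homeomorph {p : X} {n : ℕ} (h : OrderGe X p n) (e : X ≃ₜ Y) :
    OrderGe Y (e p) n := by
  obtain ⟨F, harc, hinter⟩ := h
  refine ⟨fun k => e '' F k, fun k => ?_, fun k l hkl => ?_⟩
  · obtain ⟨q, hq⟩ := harc k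
    exact ⟨e q, hq.image_homeomorph e⟩
  · rw [← image_inter e.injective, hinter k l hkl, image_singleton]

lemma OrderGe.mono {p : X} {m n : ℕ} (h : OrderGe X p n) (hmn : m ≤ n) : OrderGe X p m := by
  obtain ⟨F, harc, hinter⟩ := h
  exact ⟨fun k => F (Fin.castLE hmn k), fun k => harc _,
    fun k l hkl => hinter _ _ ((Fin.castLE_injective hmn).ne hkl)⟩

lemma orbit_ne_of_orderGe {x y : X} {n : ℕ} (hx : OrderGe X x n) (hy : ¬ OrderGe X y n) :
    orbit X x ≠ orbit X y := fun h => by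
  obtain ⟨e, rfl⟩ : y ∈ orbit X x := h ▸ mem_orbit_self y
  exact hy (hx.image_homeomorph e)

lemma oneOverHomogeneous_three {x y z : X}
    (hcover : ∀ w : X, w ∈ orbit X x ∨ w ∈ orbit X y ∨ w ∈ orbit X z)
    (hxy : orbit X x ≠ orbit X y) (hxz : orbit X x ≠ orbit X z) (hyz : orbit X y ≠ orbit X z) :
    OneOverHomogeneous X 3 := by
  refine ncard_eq_three.2 ⟨orbit X x, orbit X y, orbit X z, hxy, hxz, hyz, ?_⟩
  ext A
  constructor
  · rintro ⟨w, rfl⟩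
    rcases hcover w with h | h | h <;> simp [orbit_eq_of_mem h]
  · rintro (rfl | rfl | rfl) <;> exact ⟨_, rfl⟩

def IsHomogeneousSpace (X : Type*) [TopologicalSpace X] : Prop :=
  ∀ x y : X, y ∈ orbit X x

lemma isHomogeneousSpace_of_discreteTopology [DiscreteTopology X] : IsHomogeneousSpace X := by
  classical
  exact fun x y => ⟨(Equiv.swap x y).toHomeomorphOfDiscrete, Equiv.swap_apply_left x y⟩

lemma IsHomogeneousSpace.pi {ι : Type*} {Z : ι → Type*} [∀ i, TopologicalSpace (Z i)]
    (h : ∀ i, IsHomogeneousSpace (Z i)) : IsHomogeneousSpace (∀ i, Z i) := by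
  intro x y
  choose e he using fun i => h i (x i) (y i)
  exact ⟨Homeomorph.piCongrRight e, funext he⟩

lemma IsHomogeneousSpace.prod (hX : IsHomogeneousSpace X) (hY : IsHomogeneousSpace Y) :
    IsHomogeneousSpace (X × Y) := by
  intro x y
  obtain ⟨e₁, h₁⟩ := hX x.1 y.1
  obtain ⟨e₂, h₂⟩ := hY x.2 y.2
  exact ⟨e₁.prodCongr e₂, Prod.ext h₁ h₂⟩

lemma IsHomogeneousSpace.of_homeomorph (h : IsHomogeneousSpace X) (e : X ≃ₜ Y) :
    IsHomogeneousSpace Y := by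
  intro x y
  obtain ⟨g, hg⟩ := h (e.symm x) (e.symm y)
  exact ⟨e.symm.trans (g.trans e), by simp [hg]⟩

end GeneralTopology

lemma lt_iff_lt_of_uIcc_inter_uIcc_subset {s₁ s₂ t : ℝ} (h₁ : s₁ ≠ t) (h₂ : s₂ ≠ t)
    (h : uIcc s₁ t ∩ uIcc s₂ t ⊆ {t}) : s₁ < t ↔ t < s₂ := by
  rcases h₁.lt_or_gt with h₁ | h₁ <;> rcases h₂.lt_or_gt with h₂ | h₂
  · rw [uIcc_of_le h₁.le, uIcc_of_le h₂.le, Icc_inter_Icc, min_self] at h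
    exact absurd (h (left_mem_Icc.2 (max_le h₁.le h₂.le))) (max_lt h₁ h₂).ne
  · exact iff_of_true h₁ h₂
  · exact iff_of_false h₁.not_gt h₂.not_gt
  · rw [uIcc_of_ge h₁.le, uIcc_of_ge h₂.le, Icc_inter_Icc, max_self] at h
    exact absurd (h (right_mem_Icc.2 (le_min h₁.le h₂.le))) (lt_min h₁ h₂).ne'

lemma rpow_mem_Ioc {t : ℝ} (ht : t ∈ Ioc (0 : ℝ) 1) {α : ℝ} (hα : 0 ≤ α) : t ^ α ∈ Ioc (0 : ℝ) 1 :=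
  ⟨Real.rpow_pos_of_pos ht.1 α, Real.rpow_le_one ht.1.le ht.2 hα⟩

section CantorSet

lemma isHomogeneousSpace_cantorSet : IsHomogeneousSpace cantorSet :=
  (IsHomogeneousSpace.pi fun _ => isHomogeneousSpace_of_discreteTopology).of_homeomorph
    cantorSetHomeomorphNatToBool.symm

def cantorPiece (i : ℕ) : Set ℝ :=
  cantorSet ∩ Icc (((3 : ℝ) ^ i - 1) / 3 ^ i) (((3 : ℝ) ^ (i + 1) - 2) / 3 ^ (i + 1))

noncomputable def pieceAffine (i : ℕ) : ℝ ≃ₜ ℝ :=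
  (Homeomorph.mulRight₀ ((3 : ℝ) ^ (i + 1))⁻¹ (by positivity)).trans
    (Homeomorph.addLeft (((3 : ℝ) ^ i - 1) / 3 ^ i))

lemma pieceAffine_apply (i : ℕ) (x : ℝ) :
    pieceAffine i x = ((3 : ℝ) ^ i - 1) / 3 ^ i + x / 3 ^ (i + 1) := by
  simp [pieceAffine, div_eq_mul_inv]

lemma pieceAffine_succ (i : ℕ) (x : ℝ) : pieceAffine (i + 1) x = (2 + pieceAffine i x) / 3 := by
  simp only [pieceAffine_apply]
  field_simp
  ring

lemma cantorPiece_zero : cantorPiece 0 = (· / 3) '' cantorSet := by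
  ext x
  simp only [cantorPiece, pow_zero, zero_add, pow_one, mem_inter_iff, mem_Icc]
  constructor
  · rintro ⟨hx, -, hx3⟩
    rw [cantorSet_eq_union_halves] at hx
    rcases hx with hx | ⟨y, hy, rfl⟩
    · exact hx
    · linarith [(cantorSet_subset_unitInterval hy).1]
  · rintro ⟨y, hy, rfl⟩
    have := cantorSet_subset_unitInterval hy
    refine ⟨cantorSet_eq_union_halves ▸ Or.inl ⟨y, hy, rfl⟩, ?_, ?_⟩ <;> norm_num <;>
      linarith [this.1, this.2]

lemma cantorPiece_succ (i : ℕ) :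
    cantorPiece (i + 1) = (fun x => (2 + x) / 3) '' cantorPiece i := by
  have ha : ((3 : ℝ) ^ (i + 1) - 1) / 3 ^ (i + 1) = (2 + ((3 : ℝ) ^ i - 1) / 3 ^ i) / 3 := by
    field_simp; ring
  have hb : ((3 : ℝ) ^ (i + 1 + 1) - 2) / 3 ^ (i + 1 + 1) =
      (2 + ((3 : ℝ) ^ (i + 1) - 2) / 3 ^ (i + 1)) / 3 := by
    field_simp; ring
  have ha0 : 0 ≤ ((3 : ℝ) ^ i - 1) / 3 ^ i :=
    div_nonneg (by linarith [one_le_pow₀ (M₀ := ℝ) (a := 3) (by norm_num) (n := i)]) (by positivity)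
  ext x
  simp only [cantorPiece, mem_inter_iff, mem_Icc, mem_image, ha, hb]
  constructor
  · rintro ⟨hx, hxa, hxb⟩
    rw [cantorSet_eq_union_halves] at hx
    rcases hx with ⟨y, hy, rfl⟩ | ⟨y, hy, rfl⟩
    · linarith [(cantorSet_subset_unitInterval hy).2]
    · exact ⟨y, ⟨hy, by linarith, by linarith⟩, rfl⟩
  · rintro ⟨y, ⟨hy, hya, hyb⟩, rfl⟩
    exact ⟨cantorSet_eq_union_halves ▸ Or.inr ⟨y, hy, rfl⟩, by linarith, by linarith⟩

lemma cantorPiece_eq_image (i : ℕ) : cantorPiece i = pieceAffine i '' cantorSet := by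
  induction i with
  | zero => rw [cantorPiece_zero]; congr; funext x; simp [pieceAffine_apply]
  | succ i ih => rw [cantorPiece_succ, ih, image_image]; congr; funext x; rw [pieceAffine_succ]

lemma pieceAffine_zero_mem_cantorPiece (i : ℕ) : pieceAffine i 0 ∈ cantorPiece i :=
  cantorPiece_eq_image i ▸ mem_image_of_mem _ zero_mem_cantorSet

variable {i : ℕ} {c : ℝ}

lemma nonneg_of_mem_cantorPiece (hc : c ∈ cantorPiece i) : 0 ≤ c :=
  (cantorSet_subset_unitInterval hc.1).1

lemma lt_one_of_mem_cantorPiece (hc : c ∈ cantorPiece i) : c < 1 := by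
  have h := hc.2.2
  rw [le_div_iff₀ (by positivity)] at h
  nlinarith [pow_pos (show (0 : ℝ) < 3 by norm_num) (i + 1)]

lemma two_thirds_le_of_mem_cantorPiece (hc : c ∈ cantorPiece i) (hi : i ≠ 0) : 2 / 3 ≤ c := by
  have h := hc.2.1
  rw [div_le_iff₀ (by positivity)] at h
  have : (3 : ℝ) ≤ 3 ^ i := le_self_pow₀ (by norm_num) hi
  nlinarith

lemma one_le_two_pow_mul_half_pow {i k : ℕ} (hik : i ≤ k) : (1 : ℝ) ≤ 2 ^ k * (1 / 2) ^ i :=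
  calc (1 : ℝ) = 2 ^ i * (1 / 2) ^ i := by rw [← mul_pow]; norm_num
    _ ≤ 2 ^ k * (1 / 2) ^ i := by gcongr; norm_num

lemma two_pow_mul_half_pow_le {i k : ℕ} (hki : k < i) : (2 : ℝ) ^ k * (1 / 2) ^ i ≤ 1 / 2 :=
  calc (2 : ℝ) ^ k * (1 / 2) ^ i ≤ 2 ^ k * (1 / 2) ^ (k + 1) :=
        mul_le_mul_of_nonneg_left (pow_le_pow_of_le_one (by norm_num) (by norm_num) hki)
          (by positivity)
    _ = 1 / 2 := by rw [pow_succ, ← mul_assoc, ← mul_pow]; norm_num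

lemma two_pow_mul_half_pow_lt_iff (hc : c ∈ cantorPiece i) {k : ℕ} :
    (2 : ℝ) ^ k * (1 / 2) ^ i < c ↔ k < i := by
  refine ⟨fun h => ?_, fun hki => ?_⟩
  · by_contra! hik
    linarith [one_le_two_pow_mul_half_pow hik, lt_one_of_mem_cantorPiece hc]
  · linarith [two_pow_mul_half_pow_le hki, two_thirds_le_of_mem_cantorPiece hc (by omega)]

lemma lt_two_pow_mul_half_pow_iff (hc : c ∈ cantorPiece i) {k : ℕ} :
    c < (2 : ℝ) ^ k * (1 / 2) ^ i ↔ i ≤ k := by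
  refine ⟨fun h => ?_, fun hik => ?_⟩
  · by_contra! hki
    linarith [(two_pow_mul_half_pow_lt_iff hc).2 hki]
  · linarith [one_le_two_pow_mul_half_pow hik, lt_one_of_mem_cantorPiece hc]

end CantorSet

section Blades

def fanBase : Set (ℕ × ℝ) := {b | b.2 ∈ cantorPiece b.1}

noncomputable def tip (b : ℕ × ℝ) : ℝ × ℝ := (b.2, (1 / 2 : ℝ) ^ b.1)

lemma zero_mem_fanBase : ((0, 0) : ℕ × ℝ) ∈ fanBase := by
  simpa [fanBase, pieceAffine_apply] using pieceAffine_zero_mem_cantorPiece 0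

lemma continuous_tip : Continuous tip :=
  continuous_snd.prodMk ((continuous_of_discreteTopology (f := fun i : ℕ => (1 / 2 : ℝ) ^ i)).comp
    continuous_fst)

lemma mem_shrinkingCantorFan_iff {q : ℝ × ℝ} :
    q ∈ 𝓕 ↔ ∃ b ∈ fanBase, ∃ t ∈ Icc (0 : ℝ) 1, q = t • tip b := by
  simp only [shrinkingCantorFan, mem_iUnion, exists_prop, segment_eq_image', mem_image]
  constructor
  · rintro ⟨i, c, hc, t, ht, rfl⟩
    exact ⟨(i, c), hc, t, ht, by simp [tip]⟩
  · rintro ⟨⟨i, c⟩, hc, t, ht, rfl⟩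
    exact ⟨i, c, hc, t, ht, by simp [tip]⟩

lemma smul_tip_mem {b : ℕ × ℝ} (hb : b ∈ fanBase) {t : ℝ} (ht : t ∈ Icc (0 : ℝ) 1) :
    t • tip b ∈ 𝓕 :=
  mem_shrinkingCantorFan_iff.2 ⟨b, hb, t, ht, rfl⟩

lemma zero_mem_shrinkingCantorFan : (0 : ℝ × ℝ) ∈ 𝓕 := by
  simpa using smul_tip_mem zero_mem_fanBase (left_mem_Icc.2 zero_le_one)

end Blades

section Coordinates

def lowerGate : ℕ → ℝ
  | 0 => -1
  | k + 1 => 2 ^ k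

/-- Blades over `cantorPiece i` have slope `x / y = c * 2 ^ i` in `(2 ^ (i - 1), 2 ^ i)`, or in
`[0, 1)` for `i = 0`; `gate k` is the open cone of the slopes allowed for `k`. -/
def gate (k : ℕ) : Set (ℝ × ℝ) := {q | 0 < q.2 ∧ lowerGate k * q.2 < q.1 ∧ q.1 < 2 ^ k * q.2}

lemma isOpen_gate (k : ℕ) : IsOpen (gate k) :=
  (isOpen_lt continuous_const continuous_snd).inter
    ((isOpen_lt (continuous_const.mul continuous_snd) continuous_fst).inter
      (isOpen_lt continuous_fst (continuous_const.mul continuous_snd)))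

variable {b b' : ℕ × ℝ} {t t' : ℝ}

lemma smul_tip_mem_gate_iff (hb : b ∈ fanBase) (ht : 0 < t) {k : ℕ} :
    t • tip b ∈ gate k ↔ b.1 = k := by
  obtain ⟨i, c⟩ := b
  have hc : c ∈ cantorPiece i := hb
  simp only [gate, tip, Prod.smul_mk, smul_eq_mul, mem_ofPred_eq, mul_left_comm _ t,
    mul_lt_mul_iff_of_pos_left ht, lt_two_pow_mul_half_pow_iff hc]
  cases k with
  | zero =>
    have := nonneg_of_mem_cantorPiece hc
    simp only [lowerGate]
    constructor
    · rintro ⟨-, -, h⟩; omega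
    · rintro rfl
      exact ⟨by positivity, by norm_num; linarith, le_rfl⟩
  | succ k =>
    simp only [lowerGate, two_pow_mul_half_pow_lt_iff hc]
    constructor
    · rintro ⟨-, h₁, h₂⟩; omega
    · rintro rfl; exact ⟨by positivity, by omega, le_rfl⟩

lemma smul_tip_injective (hb : b ∈ fanBase) (hb' : b' ∈ fanBase) (ht : 0 < t) (ht' : 0 < t')
    (h : t • tip b = t' • tip b') : b = b' ∧ t = t' := by
  have hk : b'.1 = b.1 :=
    (smul_tip_mem_gate_iff hb' ht').1 (h ▸ (smul_tip_mem_gate_iff hb ht).2 rfl)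
  obtain ⟨i, c⟩ := b
  obtain ⟨i', c'⟩ := b'
  obtain rfl : i' = i := hk
  simp only [tip, Prod.smul_mk, smul_eq_mul, Prod.mk.injEq] at h
  obtain rfl : t = t' := mul_right_cancel₀ (by positivity) h.2
  exact ⟨by rw [mul_left_cancel₀ ht.ne' h.1], rfl⟩

lemma smul_tip_ne_zero (ht : t ≠ 0) : t • tip b ≠ 0 := fun h => by
  have := congrArg Prod.snd h
  simp [tip, ht] at this

lemma mem_shrinkingCantorFan_diff_zero_iff {q : ℝ × ℝ} :
    q ∈ 𝓕 \ {0} ↔ ∃ b ∈ fanBase, ∃ t ∈ Ioc (0 : ℝ) 1, q = t • tip b := by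
  constructor
  · rintro ⟨hq, hq0⟩
    obtain ⟨b, hb, t, ht, rfl⟩ := mem_shrinkingCantorFan_iff.1 hq
    have ht0 : t ≠ 0 := by rintro rfl; simp at hq0
    exact ⟨b, hb, t, ⟨lt_of_le_of_ne ht.1 (Ne.symm ht0), ht.2⟩, rfl⟩
  · rintro ⟨b, hb, t, ht, rfl⟩
    exact ⟨smul_tip_mem hb (Ioc_subset_Icc_self ht), smul_tip_ne_zero ht.1.ne'⟩

noncomputable def fanCoords : ℝ × ℝ → (ℕ × ℝ) × ℝ :=
  Function.invFunOn (fun x => x.2 • tip x.1) (fanBase ×ˢ Ioc 0 1)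

lemma fanCoords_smul_tip (hb : b ∈ fanBase) (ht : t ∈ Ioc (0 : ℝ) 1) :
    fanCoords (t • tip b) = (b, t) := by
  refine InjOn.leftInvOn_invFunOn (fun x hx y hy h => ?_)
    (show (b, t) ∈ fanBase ×ˢ Ioc (0 : ℝ) 1 from ⟨hb, ht⟩)
  obtain ⟨h₁, h₂⟩ := smul_tip_injective hx.1 hy.1 hx.2.1 hy.2.1 h
  exact Prod.ext h₁ h₂

lemma fanCoords_spec {q : ℝ × ℝ} (hq : q ∈ 𝓕 \ {0}) :
    fanCoords q ∈ fanBase ×ˢ Ioc 0 1 ∧ (fanCoords q).2 • tip (fanCoords q).1 = q := by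
  obtain ⟨b, hb, t, ht, rfl⟩ := mem_shrinkingCantorFan_diff_zero_iff.1 hq
  rw [fanCoords_smul_tip hb ht]
  exact ⟨⟨hb, ht⟩, rfl⟩

noncomputable def gateChart (k : ℕ) (q : ℝ × ℝ) : (ℕ × ℝ) × ℝ :=
  ((k, q.1 / q.2 * (1 / 2) ^ k), q.2 * 2 ^ k)

lemma fanCoords_eq_gateChart {q : ℝ × ℝ} (hq : q ∈ 𝓕) {k : ℕ} (hk : q ∈ gate k) :
    fanCoords q = gateChart k q := by
  obtain ⟨b, hb, t, ht, rfl⟩ :=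
    mem_shrinkingCantorFan_diff_zero_iff.1 ⟨hq, fun h => (mem_singleton_iff.1 h ▸ hk).1.false⟩
  obtain rfl := (smul_tip_mem_gate_iff hb ht.1).1 hk
  rw [fanCoords_smul_tip hb ht]
  obtain ⟨i, c⟩ := b
  have : t ≠ 0 := ht.1.ne'
  simp only [gateChart, tip, Prod.smul_fst, Prod.smul_snd, smul_eq_mul]
  congr 2
  · field_simp
  · rw [mul_assoc, ← mul_pow]; norm_num

lemma continuousOn_fanCoords : ContinuousOn fanCoords (𝓕 \ {0}) := by
  intro q hq
  obtain ⟨b, hb, t, ht, rfl⟩ := mem_shrinkingCantorFan_diff_zero_iff.1 hq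
  have hgate := (smul_tip_mem_gate_iff hb ht.1).2 rfl
  rw [← continuousWithinAt_inter ((isOpen_gate b.1).mem_nhds hgate)]
  have hpos : (t • tip b).2 ≠ 0 := hgate.1.ne'
  refine ContinuousAt.continuousWithinAt ?_ |>.congr
    (fun y hy => fanCoords_eq_gateChart hy.1.1 hy.2) (fanCoords_eq_gateChart hq.1 hgate)
  unfold gateChart
  fun_prop (disch := exact hpos)

end Coordinates

section BaseHomeomorph

noncomputable def fiberAffine : ℕ × ℝ ≃ₜ ℕ × ℝ where
  toFun b := (b.1, pieceAffine b.1 b.2)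
  invFun b := (b.1, (pieceAffine b.1).symm b.2)
  left_inv b := by simp
  right_inv b := by simp
  continuous_toFun := continuous_prod_of_discrete_left.2 fun i =>
    continuous_const.prodMk (pieceAffine i).continuous
  continuous_invFun := continuous_prod_of_discrete_left.2 fun i =>
    continuous_const.prodMk (pieceAffine i).symm.continuous

lemma fanBase_eq_image : fanBase = fiberAffine '' (univ ×ˢ cantorSet) := by
  ext ⟨i, c⟩
  simp [fanBase, cantorPiece_eq_image, fiberAffine]

noncomputable def fanBaseHomeomorph : fanBase ≃ₜ ℕ × cantorSet :=
  (Homeomorph.setCongr fanBase_eq_image).trans <| (fiberAffine.image _).symm.trans <|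
    (Homeomorph.Set.prod _ _).trans <| (Homeomorph.Set.univ ℕ).prodCongr (Homeomorph.refl _)

lemma isHomogeneousSpace_fanBase : IsHomogeneousSpace fanBase :=
  (isHomogeneousSpace_of_discreteTopology.prod isHomogeneousSpace_cantorSet).of_homeomorph
    fanBaseHomeomorph.symm

lemma isTotallyDisconnected_fanBase : IsTotallyDisconnected fanBase :=
  have : TotallyDisconnectedSpace cantorSet :=
    cantorSetHomeomorphNatToBool.symm.totallyDisconnectedSpace
  totallyDisconnectedSpace_subtype_iff.1 fanBaseHomeomorph.symm.totallyDisconnectedSpace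

end BaseHomeomorph

section ExtendById

variable {α : Type*} {s : Set α}

noncomputable def extendById (f : s → s) : α → α :=
  Function.extend Subtype.val (fun x => (f x : α)) id

lemma extendById_apply (f : s → s) {a : α} (ha : a ∈ s) : extendById f a = f ⟨a, ha⟩ :=
  Subtype.val_injective.extend_apply _ _ ⟨a, ha⟩

lemma mapsTo_extendById (f : s → s) : MapsTo (extendById f) s s := fun a ha => by
  rw [extendById_apply f ha]
  exact Subtype.prop _

lemma leftInvOn_extendById {f g : s → s} (h : Function.LeftInverse g f) :
    LeftInvOn (extendById g) (extendById f) s := fun a ha => by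
  rw [extendById_apply f ha, extendById_apply g (Subtype.prop _), h]

lemma continuousOn_extendById [TopologicalSpace α] {f : s → s} (hf : Continuous f) :
    ContinuousOn (extendById f) s := by
  rw [continuousOn_iff_continuous_domRestrict]
  exact (continuous_subtype_val.comp hf).congr fun x => (extendById_apply f x.2).symm

end ExtendById

section FanMap

variable {b : ℕ × ℝ} {t : ℝ}

lemma norm_tip_le_one (hb : b ∈ fanBase) : ‖tip b‖ ≤ 1 := by
  have hc : b.2 ∈ cantorPiece b.1 := hb
  simp only [tip, Prod.norm_mk, Real.norm_eq_abs, abs_of_nonneg (nonneg_of_mem_cantorPiece hc)]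
  exact max_le (lt_one_of_mem_cantorPiece hc).le
    (by rw [abs_of_pos (by positivity)]; exact pow_le_one₀ (by norm_num) (by norm_num))

lemma two_thirds_le_norm_tip (hb : b ∈ fanBase) : 2 / 3 ≤ ‖tip b‖ := by
  have hc : b.2 ∈ cantorPiece b.1 := hb
  simp only [tip, Prod.norm_mk, Real.norm_eq_abs]
  rcases eq_or_ne b.1 0 with h | h
  · exact le_max_of_le_right (by norm_num [h])
  · exact le_max_of_le_left (le_abs.2 (Or.inl (two_thirds_le_of_mem_cantorPiece hc h)))

variable {ψ ψ' : ℕ × ℝ → ℕ × ℝ} {α β : ℝ}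

noncomputable def fanMap (ψ : ℕ × ℝ → ℕ × ℝ) (α : ℝ) (q : ℝ × ℝ) : ℝ × ℝ :=
  if q = 0 then 0 else (fanCoords q).2 ^ α • tip (ψ (fanCoords q).1)

lemma fanMap_zero : fanMap ψ α 0 = 0 := if_pos rfl

lemma fanMap_smul_tip (hb : b ∈ fanBase) (ht : t ∈ Ioc (0 : ℝ) 1) :
    fanMap ψ α (t • tip b) = t ^ α • tip (ψ b) := by
  rw [fanMap, if_neg (smul_tip_ne_zero ht.1.ne'), fanCoords_smul_tip hb ht]

lemma mapsTo_fanMap (hψ : MapsTo ψ fanBase fanBase) (hα : 0 ≤ α) : MapsTo (fanMap ψ α) 𝓕 𝓕 := by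
  intro q hq
  by_cases hq0 : q = 0
  · rw [hq0, fanMap_zero]
    exact zero_mem_shrinkingCantorFan
  obtain ⟨b, hb, t, ht, rfl⟩ := mem_shrinkingCantorFan_diff_zero_iff.1 ⟨hq, hq0⟩
  rw [fanMap_smul_tip hb ht]
  exact smul_tip_mem (hψ hb) (Ioc_subset_Icc_self (rpow_mem_Ioc ht hα))

lemma fanMap_fanMap (hψ : MapsTo ψ fanBase fanBase) (hψ' : LeftInvOn ψ' ψ fanBase) (hα : 0 ≤ α)
    (hαβ : α * β = 1) {q : ℝ × ℝ} (hq : q ∈ 𝓕) : fanMap ψ' β (fanMap ψ α q) = q := by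
  by_cases hq0 : q = 0
  · rw [hq0, fanMap_zero, fanMap_zero]
  obtain ⟨b, hb, t, ht, rfl⟩ := mem_shrinkingCantorFan_diff_zero_iff.1 ⟨hq, hq0⟩
  rw [fanMap_smul_tip hb ht, fanMap_smul_tip (hψ hb) (rpow_mem_Ioc ht hα), ← Real.rpow_mul ht.1.le,
    hαβ, Real.rpow_one, hψ' hb]

/-- The factor `3 / 2` comes from `2 / 3 ≤ ‖tip b‖`. -/
lemma norm_fanMap_le (hψ : MapsTo ψ fanBase fanBase) (hα : 0 < α) {q : ℝ × ℝ} (hq : q ∈ 𝓕) :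
    ‖fanMap ψ α q‖ ≤ (3 / 2 * ‖q‖) ^ α := by
  by_cases hq0 : q = 0
  · rw [hq0, fanMap_zero, norm_zero]
    positivity
  obtain ⟨b, hb, t, ht, rfl⟩ := mem_shrinkingCantorFan_diff_zero_iff.1 ⟨hq, hq0⟩
  rw [fanMap_smul_tip hb ht, norm_smul, norm_smul, Real.norm_of_nonneg ht.1.le,
    Real.norm_of_nonneg (Real.rpow_nonneg ht.1.le α)]
  calc t ^ α * ‖tip (ψ b)‖ ≤ t ^ α :=
        mul_le_of_le_one_right (Real.rpow_nonneg ht.1.le α) (norm_tip_le_one (hψ hb))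
    _ ≤ (3 / 2 * (t * ‖tip b‖)) ^ α :=
        Real.rpow_le_rpow ht.1.le (by nlinarith [two_thirds_le_norm_tip hb, ht.1]) hα.le

lemma continuousOn_fanMap (hψ : MapsTo ψ fanBase fanBase) (hψc : ContinuousOn ψ fanBase)
    (hα : 0 < α) : ContinuousOn (fanMap ψ α) 𝓕 := by
  have hoff : ContinuousOn (fanMap ψ α) (𝓕 \ {0}) := by
    have h₁ : ContinuousOn (fun q => (fanCoords q).2 ^ α) (𝓕 \ {0}) :=
      (continuous_snd.comp_continuousOn continuousOn_fanCoords).rpow_const fun _ _ => Or.inr hα.le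
    have h₂ : ContinuousOn (fun q => tip (ψ (fanCoords q).1)) (𝓕 \ {0}) :=
      continuous_tip.comp_continuousOn <| hψc.comp
        (continuous_fst.comp_continuousOn continuousOn_fanCoords) fun q hq => (fanCoords_spec hq).1.1
    exact (h₁.smul h₂).congr fun q hq => if_neg hq.2
  intro q hq
  rcases eq_or_ne q 0 with rfl | hq0
  · have hlim : ContinuousAt (fun q : ℝ × ℝ => (3 / 2 * ‖q‖) ^ α) 0 :=
      ((continuous_const.mul continuous_norm).continuousAt).rpow_const (Or.inr hα.le)
    rw [ContinuousWithinAt, fanMap_zero]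
    refine squeeze_zero_norm'
      (eventually_nhdsWithin_of_forall fun q hq => norm_fanMap_le hψ hα hq) ?_
    simpa [Real.zero_rpow hα.ne'] using hlim.tendsto.mono_left nhdsWithin_le_nhds
  · exact (hoff q ⟨hq, hq0⟩).mono_of_mem_nhdsWithin
      (inter_mem_nhdsWithin _ (isOpen_compl_singleton.mem_nhds hq0))

noncomputable def fanHomeomorph (Ψ : fanBase ≃ₜ fanBase) (hα : 0 < α) : 𝓕 ≃ₜ 𝓕 where
  toFun := (mapsTo_fanMap (mapsTo_extendById Ψ) hα.le).restrict _ _ _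
  invFun := (mapsTo_fanMap (mapsTo_extendById Ψ.symm) (inv_nonneg.2 hα.le)).restrict _ _ _
  left_inv q := Subtype.ext <| fanMap_fanMap (mapsTo_extendById Ψ)
    (leftInvOn_extendById Ψ.left_inv) hα.le (mul_inv_cancel₀ hα.ne') q.2
  right_inv q := Subtype.ext <| fanMap_fanMap (mapsTo_extendById Ψ.symm)
    (leftInvOn_extendById Ψ.right_inv) (inv_nonneg.2 hα.le) (inv_mul_cancel₀ hα.ne') q.2
  continuous_toFun := (continuousOn_fanMap (mapsTo_extendById Ψ)
    (continuousOn_extendById Ψ.continuous) hα).mapsToRestrict _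
  continuous_invFun := (continuousOn_fanMap (mapsTo_extendById Ψ.symm)
    (continuousOn_extendById Ψ.symm.continuous) (inv_pos.2 hα)).mapsToRestrict _

lemma mem_orbit_of_coe_eq_smul_tip {x y : 𝓕} {b' : ℕ × ℝ} (hb : b ∈ fanBase) (hb' : b' ∈ fanBase)
    (ht : t ∈ Ioc (0 : ℝ) 1) (hα : 0 < α) (hx : (x : ℝ × ℝ) = t • tip b)
    (hy : (y : ℝ × ℝ) = t ^ α • tip b') : y ∈ orbit 𝓕 x := by
  obtain ⟨Ψ, hΨ⟩ := isHomogeneousSpace_fanBase ⟨b, hb⟩ ⟨b', hb'⟩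
  refine ⟨fanHomeomorph Ψ hα, Subtype.ext ?_⟩
  change fanMap (extendById Ψ) α x = y
  rw [hx, hy, fanMap_smul_tip hb ht, extendById_apply Ψ hb, hΨ]

end FanMap

section Arcs

variable {b : ℕ × ℝ} {t : ℝ}

lemma smul_tip_left_injective (b : ℕ × ℝ) : Function.Injective fun s : ℝ => s • tip b :=
  smul_left_injective ℝ fun h => by simpa [tip] using congrArg Prod.snd h

def bladeArc (b : ℕ × ℝ) (I : Set ℝ) : Set 𝓕 := {x | ∃ s ∈ I, (x : ℝ × ℝ) = s • tip b}

lemma bladeArc_inter (b : ℕ × ℝ) (I J : Set ℝ) :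
    bladeArc b I ∩ bladeArc b J = bladeArc b (I ∩ J) := by
  ext x
  constructor
  · rintro ⟨⟨s, hs, hx⟩, ⟨s', hs', hx'⟩⟩
    obtain rfl := smul_tip_left_injective b (hx.symm.trans hx')
    exact ⟨s, ⟨hs, hs'⟩, hx⟩
  · rintro ⟨s, hs, hx⟩
    exact ⟨⟨s, hs.1, hx⟩, ⟨s, hs.2, hx⟩⟩

lemma isArcWith_bladeArc (hb : b ∈ fanBase) {s₁ s₂ : ℝ} (hs₁ : s₁ ∈ Icc (0 : ℝ) 1)
    (hs₂ : s₂ ∈ Icc (0 : ℝ) 1) (hne : s₁ ≠ s₂) {x y : 𝓕} (hx : (x : ℝ × ℝ) = s₁ • tip b)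
    (hy : (y : ℝ × ℝ) = s₂ • tip b) : IsArcWith (bladeArc b (uIcc s₁ s₂)) x y := by
  have hI : uIcc s₁ s₂ = AffineMap.lineMap s₁ s₂ '' Icc (0 : ℝ) 1 := by
    rw [← segment_eq_uIcc, segment_eq_image_lineMap]
  have hmem : ∀ u : unitInterval, AffineMap.lineMap s₁ s₂ (u : ℝ) ∈ uIcc s₁ s₂ := fun u =>
    hI ▸ mem_image_of_mem _ u.2
  let γ : unitInterval → 𝓕 := fun u =>
    ⟨AffineMap.lineMap s₁ s₂ (u : ℝ) • tip b, smul_tip_mem hb (uIcc_subset_Icc hs₁ hs₂ (hmem u))⟩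
  have hγ : Continuous γ := by fun_prop
  have hinj : Function.Injective γ := fun u v h => Subtype.ext <|
    AffineMap.lineMap_injective ℝ hne (smul_tip_left_injective b (congrArg Subtype.val h))
  have hrange : range γ = bladeArc b (uIcc s₁ s₂) := by
    ext z
    constructor
    · rintro ⟨u, rfl⟩
      exact ⟨_, hmem u, rfl⟩
    · rintro ⟨s, hs, hz⟩
      obtain ⟨u, hu, rfl⟩ := hI ▸ hs
      exact ⟨⟨u, hu⟩, Subtype.ext hz.symm⟩
  have h0 : γ 0 = x := Subtype.ext (by simp [γ, hx])
  have h1 : γ 1 = y := Subtype.ext (by simp [γ, hy])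
  simpa only [hrange, h0, h1] using isArcWith_range hγ hinj

/-- The blade labels are totally disconnected, so `fanCoords` has constant label on `S`. -/
lemma exists_ordConnected_eq_image_smul_tip {S : Set (ℝ × ℝ)} (hS : IsPreconnected S)
    (hS0 : S ⊆ 𝓕 \ {0}) (hb : b ∈ fanBase) (ht : t ∈ Ioc (0 : ℝ) 1) (htS : t • tip b ∈ S) :
    ∃ T : Set ℝ, T.OrdConnected ∧ T ⊆ Ioc 0 1 ∧ S = (fun s => s • tip b) '' T := by
  have hκ : IsPreconnected (fanCoords '' S) := hS.image _ (continuousOn_fanCoords.mono hS0)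
  have hbase : ∀ q ∈ S, (fanCoords q).1 = b := by
    have hsub : (Prod.fst ∘ fanCoords) '' S ⊆ fanBase := by
      rintro _ ⟨q, hq, rfl⟩
      exact (fanCoords_spec (hS0 hq)).1.1
    have := isTotallyDisconnected_fanBase _ hsub (image_comp Prod.fst fanCoords S ▸
      hκ.image _ continuous_fst.continuousOn)
    intro q hq
    simpa [fanCoords_smul_tip hb ht] using this (mem_image_of_mem _ hq) (mem_image_of_mem _ htS)
  refine ⟨(fun q => (fanCoords q).2) '' S, ?_, ?_, ?_⟩
  · exact (image_comp Prod.snd fanCoords S ▸ hκ.image _ continuous_snd.continuousOn).ordConnected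
  · rintro _ ⟨q, hq, rfl⟩
    exact (fanCoords_spec (hS0 hq)).1.2
  · rw [image_image]
    refine Eq.symm ((image_congr fun q hq => ?_).trans (image_id S))
    rw [← hbase q hq, (fanCoords_spec (hS0 hq)).2]
    rfl

end Arcs

section Order

variable {b : ℕ × ℝ} {t : ℝ}

/-- An initial piece of the arc avoids the vertex, hence lies on the blade of `b`. -/
lemma exists_bladeArc_subset_of_isArcWith (hb : b ∈ fanBase) (ht : t ∈ Ioc (0 : ℝ) 1)
    {A : Set 𝓕} {x y : 𝓕} (hA : IsArcWith A x y) (hx : (x : ℝ × ℝ) = t • tip b) :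
    ∃ s ∈ Icc (0 : ℝ) 1, s ≠ t ∧ bladeArc b (uIcc s t) ⊆ A := by
  obtain ⟨h, hx0, -⟩ := hA
  let γ : ℝ → ℝ × ℝ := fun r => (h (projIcc 0 1 zero_le_one r) : 𝓕)
  have hγ : Continuous γ := by fun_prop
  have hγ0 : γ 0 = t • tip b := by simp [γ, projIcc_left, ← hx, ← hx0]
  obtain ⟨δ, hδ, hδ1, hγδ⟩ : ∃ δ > 0, δ ≤ 1 ∧ ∀ r ∈ Icc 0 δ, γ r ≠ 0 := by
    obtain ⟨ε, hε, hball⟩ := Metric.eventually_nhds_iff.1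
      (hγ.continuousAt.eventually_ne (hγ0 ▸ smul_tip_ne_zero ht.1.ne'))
    refine ⟨min (ε / 2) 1, by positivity, min_le_right _ _, fun r hr => hball ?_⟩
    rw [Real.dist_eq, sub_zero, abs_of_nonneg hr.1]
    linarith [hr.2, min_le_left (ε / 2) 1]
  have hS0 : γ '' Icc 0 δ ⊆ 𝓕 \ {0} := by
    rintro _ ⟨r, hr, rfl⟩
    exact ⟨Subtype.prop _, hγδ r hr⟩
  obtain ⟨T, hT, hT1, hST⟩ := exists_ordConnected_eq_image_smul_tip
    (isPreconnected_Icc.image γ hγ.continuousOn) hS0 hb ht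
    (hγ0 ▸ mem_image_of_mem γ ⟨le_rfl, hδ.le⟩)
  have htT : t ∈ T := by
    obtain ⟨t', ht', h'⟩ := hST ▸ hγ0 ▸ mem_image_of_mem γ (⟨le_rfl, hδ.le⟩ : (0 : ℝ) ∈ Icc 0 δ)
    rwa [← smul_tip_left_injective b h']
  obtain ⟨s, hsT, hs⟩ := hST ▸ mem_image_of_mem γ (⟨hδ.le, le_rfl⟩ : δ ∈ Icc 0 δ)
  refine ⟨s, Ioc_subset_Icc_self (hT1 hsT), fun hst => ?_, fun z ⟨w, hw, hz⟩ => ?_⟩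
  · have h0δ : γ δ = γ 0 := by rw [← hs, hst, hγ0]
    have := congrArg Subtype.val (h.injective (Subtype.ext (Subtype.ext h0δ)))
    simp [projIcc, hδ1] at this
    linarith
  · obtain ⟨r, -, hr⟩ := hST ▸ mem_image_of_mem (fun s => s • tip b) (hT.uIcc_subset hsT htT hw)
    rw [show z = h (projIcc 0 1 zero_le_one r) from Subtype.ext (hr.trans hz.symm).symm]
    exact Subtype.prop _

lemma exists_sides_of_orderGe (hb : b ∈ fanBase) (ht : t ∈ Ioc (0 : ℝ) 1) {x : 𝓕}
    (hx : (x : ℝ × ℝ) = t • tip b) {n : ℕ} (h : OrderGe 𝓕 x n) :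
    ∃ s : Fin n → ℝ, (∀ k, s k ∈ Icc (0 : ℝ) 1 ∧ s k ≠ t) ∧
      ∀ k l, k ≠ l → (s k < t ↔ t < s l) := by
  obtain ⟨F, harc, hinter⟩ := h
  choose y hy using harc
  choose s hs hst hsub using fun k => exists_bladeArc_subset_of_isArcWith hb ht (hy k) hx
  refine ⟨s, fun k => ⟨hs k, hst k⟩, fun k l hkl => ?_⟩
  refine lt_iff_lt_of_uIcc_inter_uIcc_subset (hst k) (hst l) fun w hw => ?_
  have hwI : w ∈ Icc (0 : ℝ) 1 := uIcc_subset_Icc (hs k) (Ioc_subset_Icc_self ht) hw.1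
  have hmem : (⟨w • tip b, smul_tip_mem hb hwI⟩ : 𝓕) ∈ F k ∩ F l :=
    ⟨hsub k ⟨w, hw.1, rfl⟩, hsub l ⟨w, hw.2, rfl⟩⟩
  rw [hinter k l hkl, mem_singleton_iff, Subtype.ext_iff, hx] at hmem
  exact smul_tip_left_injective b hmem

lemma le_two_of_orderGe (hb : b ∈ fanBase) (ht : t ∈ Ioc (0 : ℝ) 1) {x : 𝓕}
    (hx : (x : ℝ × ℝ) = t • tip b) {n : ℕ} (h : OrderGe 𝓕 x n) : n ≤ 2 := by
  obtain ⟨s, hs, hside⟩ := exists_sides_of_orderGe hb ht hx h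
  have hinj : Function.Injective fun k => decide (s k < t) := fun k l hkl => by
    by_contra hne
    simp only [decide_eq_decide] at hkl
    have hl := hkl.symm.trans (hside k l hne)
    rcases (hs l).2.lt_or_gt with h | h
    · exact lt_asymm h (hl.1 h)
    · exact lt_asymm h (hl.2 h)
  simpa using Fintype.card_le_of_injective _ hinj

lemma le_one_of_orderGe_tip (hb : b ∈ fanBase) {x : 𝓕} (hx : (x : ℝ × ℝ) = tip b) {n : ℕ}
    (h : OrderGe 𝓕 x n) : n ≤ 1 := by
  obtain ⟨s, hs, hside⟩ := exists_sides_of_orderGe hb ⟨one_pos, le_rfl⟩ (by rw [hx, one_smul]) h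
  by_contra! hn
  have hlt : ∀ k, s k < 1 := fun k => lt_of_le_of_ne (hs k).1.2 (hs k).2
  exact (hlt ⟨1, hn⟩).not_gt ((hside ⟨0, by omega⟩ ⟨1, hn⟩ (by simp)).1 (hlt _))

lemma orderGe_three_of_coe_eq_zero {v : 𝓕} (hv : (v : ℝ × ℝ) = 0) : OrderGe 𝓕 v 3 := by
  let b : Fin 3 → ℕ × ℝ := fun k => ((k : ℕ), pieceAffine k 0)
  have hb : ∀ k, b k ∈ fanBase := fun k => pieceAffine_zero_mem_cantorPiece k
  have h01 : (0 : ℝ) ∈ Icc (0 : ℝ) 1 := left_mem_Icc.2 zero_le_one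
  have h11 : (1 : ℝ) ∈ Icc (0 : ℝ) 1 := right_mem_Icc.2 zero_le_one
  refine ⟨fun k => bladeArc (b k) (uIcc 0 1),
    fun k => ⟨⟨(1 : ℝ) • tip (b k), smul_tip_mem (hb k) h11⟩,
      isArcWith_bladeArc (hb k) h01 h11 zero_ne_one (by simp [hv]) rfl⟩, fun k l hkl => ?_⟩
  ext z
  simp only [mem_inter_iff, mem_singleton_iff, Subtype.ext_iff, hv]
  constructor
  · rintro ⟨⟨s, hs, hz⟩, ⟨s', hs', hz'⟩⟩
    by_contra hz0
    rw [uIcc_of_le zero_le_one] at hs hs'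
    have hpos : ∀ {r c}, r ∈ Icc (0 : ℝ) 1 → (z : ℝ × ℝ) = r • tip c → 0 < r := fun hr hzr =>
      lt_of_le_of_ne hr.1 fun h => hz0 (by rw [hzr, ← h, zero_smul])
    have := smul_tip_injective (hb k) (hb l) (hpos hs hz) (hpos hs' hz') (hz.symm.trans hz')
    exact hkl (Fin.ext (congrArg Prod.fst this.1))
  · intro hz
    exact ⟨⟨0, left_mem_uIcc, by rw [hz, zero_smul]⟩, ⟨0, left_mem_uIcc, by rw [hz, zero_smul]⟩⟩

lemma orderGe_two_of_mem_Ioo (hb : b ∈ fanBase) (ht : t ∈ Ioo (0 : ℝ) 1) {x : 𝓕}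
    (hx : (x : ℝ × ℝ) = t • tip b) : OrderGe 𝓕 x 2 := by
  have htI := Ioo_subset_Icc_self ht
  have key : bladeArc b (uIcc t 0) ∩ bladeArc b (uIcc t 1) = {x} := by
    rw [bladeArc_inter, uIcc_of_ge ht.1.le, uIcc_of_le ht.2.le,
      Icc_inter_Icc_eq_singleton ht.1.le ht.2.le]
    ext z
    simp [bladeArc, Subtype.ext_iff, hx]
  refine ⟨![bladeArc b (uIcc t 0), bladeArc b (uIcc t 1)], fun k => ?_, fun k l hkl => ?_⟩
  · fin_cases k
    · exact ⟨⟨(0 : ℝ) • tip b, smul_tip_mem hb (left_mem_Icc.2 zero_le_one)⟩,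
        isArcWith_bladeArc hb htI (left_mem_Icc.2 zero_le_one) ht.1.ne' hx rfl⟩
    · exact ⟨⟨(1 : ℝ) • tip b, smul_tip_mem hb (right_mem_Icc.2 zero_le_one)⟩,
        isArcWith_bladeArc hb htI (right_mem_Icc.2 zero_le_one) ht.2.ne hx rfl⟩
  · fin_cases k <;> fin_cases l <;> simp_all [inter_comm]

end Order

section CanonicalPoints

def fanVertex : 𝓕 := ⟨0, zero_mem_shrinkingCantorFan⟩

noncomputable def fanEndpoint : 𝓕 :=
  ⟨(1 : ℝ) • tip (0, 0), smul_tip_mem zero_mem_fanBase (right_mem_Icc.2 zero_le_one)⟩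

noncomputable def fanMidpoint : 𝓕 :=
  ⟨(1 / 2 : ℝ) • tip (0, 0), smul_tip_mem zero_mem_fanBase ⟨by norm_num, by norm_num⟩⟩

lemma mem_orbit_fanVertex_or_fanEndpoint_or_fanMidpoint (w : 𝓕) :
    w ∈ orbit 𝓕 fanVertex ∨ w ∈ orbit 𝓕 fanEndpoint ∨ w ∈ orbit 𝓕 fanMidpoint := by
  obtain ⟨b, hb, t, ⟨ht0, ht1⟩, hw⟩ := mem_shrinkingCantorFan_iff.1 w.2
  rcases ht0.eq_or_lt with rfl | ht0
  · left
    rw [show w = fanVertex from Subtype.ext (by simp [hw, fanVertex])]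
    exact mem_orbit_self _
  rcases ht1.eq_or_lt with rfl | ht1
  · exact Or.inr <| Or.inl <| mem_orbit_of_coe_eq_smul_tip zero_mem_fanBase hb
      (right_mem_Ioc.2 zero_lt_one) zero_lt_one rfl (by rw [hw, Real.one_rpow])
  · refine Or.inr <| Or.inr <| mem_orbit_of_coe_eq_smul_tip (α := Real.logb (1 / 2) t)
      zero_mem_fanBase hb ⟨by norm_num, by norm_num⟩
      (Real.logb_pos_of_base_lt_one (by norm_num) (by norm_num) ht0 ht1) rfl ?_
    rw [hw, Real.rpow_logb (by norm_num) (by norm_num) ht0]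

end CanonicalPoints

/-- The shrinking Cantor fan `F_{C_ω}` is `1/3`-homogeneous. -/
theorem shrinkingCantorFan_oneThirdHomogeneous :
    OneOverHomogeneous shrinkingCantorFan 3 := by
  have hmid : (1 / 2 : ℝ) ∈ Ioo (0 : ℝ) 1 := by norm_num
  have hv : OrderGe shrinkingCantorFan fanVertex 3 := orderGe_three_of_coe_eq_zero rfl
  have he : ¬ OrderGe shrinkingCantorFan fanEndpoint 2 := fun h => by
    simpa using le_one_of_orderGe_tip zero_mem_fanBase (one_smul ℝ _) h
  have hm₂ : OrderGe shrinkingCantorFan fanMidpoint 2 :=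
    orderGe_two_of_mem_Ioo zero_mem_fanBase hmid rfl
  have hm₃ : ¬ OrderGe shrinkingCantorFan fanMidpoint 3 := fun h => by
    simpa using le_two_of_orderGe zero_mem_fanBase (Ioo_subset_Ioc_self hmid) rfl h
  exact oneOverHomogeneous_three mem_orbit_fanVertex_or_fanEndpoint_or_fanMidpoint
    (orbit_ne_of_orderGe (hv.mono (by norm_num)) he) (orbit_ne_of_orderGe hv hm₃)
    (orbit_ne_of_orderGe hm₂ he).symm

end FansHomogeneity
end

section
/- If X is a fan with O(X) ⊆ S(X), then X is smooth. -/
open Set Filter Topology Metric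

namespace FansHomogeneity

/-!
At an ordinary point smoothness is assumed, so let `a` be the top or an endpoint, and let `L`
be a Hausdorff limit of arcs `t aₙ` with `aₙ → a`. Then `L` is a continuum containing `t a`.
If `x ∈ L \ t a`, then `t x ∩ t a = {t}`, since `a` is not interior to an arc from `t`.
Approximate `x` by `xₙ ∈ t aₙ`; a limit `Q` of the arcs `xₙ aₙ` is a continuum through `x`
and `a`, hence through `t`, so it contains `t x`. An interior point `p` of `t x` is ordinary,
and points `pₙ ∈ xₙ aₙ` tending to `p` satisfy `xₙ ∈ t pₙ`; smoothness at `p` then gives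
`x ∈ t p ⊊ t x`.
-/

section Arc

variable {X : Type*} [TopologicalSpace X] {A B : Set X} {p q : X}

theorem isArcWith_iff : IsArcWith A p q ↔
    ∃ f : unitInterval → X, IsEmbedding f ∧ range f = A ∧ f 0 = p ∧ f 1 = q := by
  constructor
  · rintro ⟨e, h0, h1⟩
    refine ⟨Subtype.val ∘ e, IsEmbedding.subtypeVal.comp e.isEmbedding, ?_, h0, h1⟩
    rw [range_comp, e.range_coe, image_univ, Subtype.range_coe]
  · rintro ⟨f, hf, rfl, rfl, rfl⟩
    exact ⟨hf.toHomeomorph, rfl, rfl⟩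

theorem IsArcWith.ne (h : IsArcWith A p q) : p ≠ q := by
  obtain ⟨f, hf, -, rfl, rfl⟩ := isArcWith_iff.1 h
  exact hf.injective.ne zero_ne_one

theorem IsArcWith.symm (h : IsArcWith A p q) : IsArcWith A q p := by
  obtain ⟨e, h0, h1⟩ := h
  exact ⟨unitInterval.symmHomeomorph.trans e, by simpa using h1, by simpa using h0⟩

theorem IsArcWith.isSubcontinuum (h : IsArcWith A p q) : IsSubcontinuum A := by
  obtain ⟨f, hf, rfl, -, -⟩ := isArcWith_iff.1 h
  exact ⟨isCompact_range hf.continuous, isConnected_range hf.continuous⟩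

theorem IsArcWith.left_mem (h : IsArcWith A p q) : p ∈ A := by
  obtain ⟨f, -, rfl, rfl, -⟩ := isArcWith_iff.1 h
  exact mem_range_self 0

theorem IsArcWith.right_mem (h : IsArcWith A p q) : q ∈ A :=
  h.symm.left_mem

theorem IsArcWith.subset_of_isPreconnected {S : Set X} (h : IsArcWith A p q) (hSA : S ⊆ A)
    (hS : IsPreconnected S) (hp : p ∈ S) (hq : q ∈ S) : A ⊆ S := by
  obtain ⟨f, hf, rfl, rfl, rfl⟩ := isArcWith_iff.1 h
  have hT : IsPreconnected (f ⁻¹' S) := by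
    rwa [← hf.isInducing.isPreconnected_image, image_preimage_eq_of_subset hSA]
  rintro _ ⟨u, rfl⟩
  exact hT.Icc_subset hp hq ⟨unitInterval.nonneg', unitInterval.le_one'⟩

theorem IsArcOrPt.symm (h : IsArcOrPt A p q) : IsArcOrPt A q p := by
  rcases h with ⟨rfl, rfl⟩ | h
  exacts [Or.inl ⟨rfl, rfl⟩, Or.inr h.symm]

theorem IsArcOrPt.isArcWith (h : IsArcOrPt A p q) (hpq : p ≠ q) : IsArcWith A p q :=
  h.resolve_left fun h' => hpq h'.1

theorem IsArcOrPt.eq_singleton (h : IsArcOrPt A p p) : A = {p} :=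
  h.elim And.right fun h' => absurd rfl h'.ne

theorem IsArcOrPt.isSubcontinuum (h : IsArcOrPt A p q) : IsSubcontinuum A := by
  rcases h with ⟨rfl, rfl⟩ | h
  exacts [⟨isCompact_singleton, isConnected_singleton⟩, h.isSubcontinuum]

theorem IsArcOrPt.left_mem (h : IsArcOrPt A p q) : p ∈ A := by
  rcases h with ⟨rfl, rfl⟩ | h
  exacts [rfl, h.left_mem]

theorem IsArcOrPt.right_mem (h : IsArcOrPt A p q) : q ∈ A :=
  h.symm.left_mem

theorem IsArcOrPt.unique (hHU : HereditarilyUnicoherent X) (hA : IsArcOrPt A p q)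
    (hB : IsArcOrPt B p q) : A = B := by
  rcases eq_or_ne p q with rfl | hpq
  · rw [hA.eq_singleton, hB.eq_singleton]
  replace hA := hA.isArcWith hpq
  replace hB := hB.isArcWith hpq
  have hAB := hHU A B hA.isSubcontinuum hB.isSubcontinuum
  have hp : p ∈ A ∩ B := ⟨hA.left_mem, hB.left_mem⟩
  have hq : q ∈ A ∩ B := ⟨hA.right_mem, hB.right_mem⟩
  exact Subset.antisymm (fun x hx => (hA.subset_of_isPreconnected inter_subset_left hAB hp hq hx).2)
    (fun x hx => (hB.subset_of_isPreconnected inter_subset_right hAB hp hq hx).1)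

theorem exists_isEmbedding_range_eq_Icc {s s' : unitInterval} (h : s < s') :
    ∃ g : unitInterval → unitInterval,
      IsEmbedding g ∧ range g = Icc s s' ∧ g 0 = s ∧ g 1 = s' := by
  let e := iccHomeoI (s : ℝ) s' h
  have hss' : Icc (s : ℝ) s' ⊆ unitInterval := Icc_subset_Icc s.2.1 s'.2.2
  refine ⟨inclusion hss' ∘ e.symm, (IsEmbedding.inclusion hss').comp e.symm.isEmbedding,
    ?_, Subtype.ext ?_, Subtype.ext ?_⟩
  · rw [range_comp, e.symm.range_coe, image_univ, range_inclusion]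
    ext x
    simp [← Subtype.coe_le_coe]
  all_goals simp [e]

theorem isArcOrPt_image_Icc {f : unitInterval → X} (hf : IsEmbedding f) {s s' : unitInterval}
    (h : s ≤ s') : IsArcOrPt (f '' Icc s s') (f s) (f s') := by
  rcases h.lt_or_eq with h | rfl
  · obtain ⟨g, hg, hrange, rfl, rfl⟩ := exists_isEmbedding_range_eq_Icc h
    refine Or.inr (isArcWith_iff.2 ⟨f ∘ g, hf.comp hg, ?_, rfl, rfl⟩)
    rw [range_comp, hrange]
  · exact Or.inl ⟨rfl, by rw [Icc_self, image_singleton]⟩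

end Arc

section DendroidArc

variable {X : Type*} [TopologicalSpace X] {p q u v : X}

/-- The arc from `p` to `q`, or `{p}` if `p = q`: unique in a hereditarily unicoherent
space, an arbitrary set if there is none. -/
noncomputable def arc (p q : X) : Set X :=
  Classical.epsilon fun A => IsArcOrPt A p q

theorem isArcOrPt_arc (hAC : ArcwiseConnected X) (p q : X) : IsArcOrPt (arc p q) p q := by
  refine Classical.epsilon_spec (p := fun A => IsArcOrPt A p q) ?_
  rcases eq_or_ne p q with rfl | hpq
  · exact ⟨{p}, Or.inl ⟨rfl, rfl⟩⟩
  · obtain ⟨A, hA⟩ := hAC p q hpq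
    exact ⟨A, Or.inr hA⟩

theorem arc_self (p : X) : arc p p = {p} :=
  (Classical.epsilon_spec (p := fun A => IsArcOrPt A p p)
    ⟨{p}, Or.inl ⟨rfl, rfl⟩⟩).eq_singleton

theorem IsArcOrPt.eq_arc (hAC : ArcwiseConnected X) (hHU : HereditarilyUnicoherent X)
    {A : Set X} (h : IsArcOrPt A p q) : A = arc p q :=
  h.unique hHU (isArcOrPt_arc hAC p q)

theorem left_mem_arc (hAC : ArcwiseConnected X) (p q : X) : p ∈ arc p q :=
  (isArcOrPt_arc hAC p q).left_mem

theorem right_mem_arc (hAC : ArcwiseConnected X) (p q : X) : q ∈ arc p q :=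
  (isArcOrPt_arc hAC p q).right_mem

theorem isSubcontinuum_arc (hAC : ArcwiseConnected X) (p q : X) : IsSubcontinuum (arc p q) :=
  (isArcOrPt_arc hAC p q).isSubcontinuum

theorem arc_comm (hAC : ArcwiseConnected X) (hHU : HereditarilyUnicoherent X) (p q : X) :
    arc p q = arc q p :=
  (isArcOrPt_arc hAC p q).symm.eq_arc hAC hHU

theorem isArcWith_arc (hAC : ArcwiseConnected X) (hpq : p ≠ q) : IsArcWith (arc p q) p q :=
  (isArcOrPt_arc hAC p q).isArcWith hpq

theorem arc_eq_image_Icc (hAC : ArcwiseConnected X) (hHU : HereditarilyUnicoherent X)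
    {f : unitInterval → X} (hf : IsEmbedding f) {s s' : unitInterval} (h : s ≤ s') :
    arc (f s) (f s') = f '' Icc s s' :=
  ((isArcOrPt_image_Icc hf h).eq_arc hAC hHU).symm

theorem arc_subset_of_isSubcontinuum (hAC : ArcwiseConnected X)
    (hHU : HereditarilyUnicoherent X) {K : Set X} (hK : IsSubcontinuum K) (hp : p ∈ K)
    (hq : q ∈ K) : arc p q ⊆ K := by
  rcases eq_or_ne p q with rfl | hpq
  · rwa [arc_self, singleton_subset_iff]
  have h := isArcWith_arc hAC hpq
  exact fun x hx => (h.subset_of_isPreconnected inter_subset_right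
    (hHU K _ hK h.isSubcontinuum) ⟨hp, h.left_mem⟩ ⟨hq, h.right_mem⟩ hx).1

theorem exists_mem_arc_ne_ne (hAC : ArcwiseConnected X) (hpq : p ≠ q) :
    ∃ c ∈ arc p q, c ≠ p ∧ c ≠ q := by
  obtain ⟨f, hf, hrange, rfl, rfl⟩ := isArcWith_iff.1 (isArcWith_arc hAC hpq)
  let half : unitInterval := ⟨1 / 2, by norm_num, by norm_num⟩
  refine ⟨f half, hrange ▸ mem_range_self half, hf.injective.ne ?_, hf.injective.ne ?_⟩ <;>
    simp [half, Subtype.ext_iff]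

theorem arc_inter_arc_eq_singleton (hAC : ArcwiseConnected X) (hHU : HereditarilyUnicoherent X)
    (hu : u ∈ arc p q) : arc p u ∩ arc u q = {u} := by
  rcases eq_or_ne p q with rfl | hpq
  · rw [arc_self, mem_singleton_iff] at hu
    rw [hu, arc_self, inter_self]
  obtain ⟨f, hf, hrange, rfl, rfl⟩ := isArcWith_iff.1 (isArcWith_arc hAC hpq)
  obtain ⟨s, rfl⟩ := hrange ▸ hu
  rw [arc_eq_image_Icc hAC hHU hf unitInterval.nonneg',
    arc_eq_image_Icc hAC hHU hf unitInterval.le_one', ← image_inter hf.injective,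
    Icc_inter_Icc_eq_singleton unitInterval.nonneg' unitInterval.le_one', image_singleton]

theorem eq_of_mem_arc_of_mem_arc (hAC : ArcwiseConnected X) (hHU : HereditarilyUnicoherent X)
    (hu : u ∈ arc p q) (hq : q ∈ arc p u) : u = q := by
  have hq' : q ∈ arc p u ∩ arc u q := ⟨hq, right_mem_arc hAC u q⟩
  rw [arc_inter_arc_eq_singleton hAC hHU hu, mem_singleton_iff] at hq'
  exact hq'.symm

theorem mem_arc_of_mem_arc_of_mem_arc (hAC : ArcwiseConnected X)
    (hHU : HereditarilyUnicoherent X) (hu : u ∈ arc p q) (hv : v ∈ arc u q) :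
    u ∈ arc p v := by
  rcases eq_or_ne p q with rfl | hpq
  · rw [arc_self, mem_singleton_iff] at hu
    exact hu ▸ left_mem_arc hAC u v
  obtain ⟨f, hf, hrange, rfl, rfl⟩ := isArcWith_iff.1 (isArcWith_arc hAC hpq)
  obtain ⟨s, rfl⟩ := hrange ▸ hu
  rw [arc_eq_image_Icc hAC hHU hf unitInterval.le_one'] at hv
  obtain ⟨r, ⟨hsr, -⟩, rfl⟩ := hv
  rw [arc_eq_image_Icc hAC hHU hf unitInterval.nonneg']
  exact mem_image_of_mem f ⟨unitInterval.nonneg', hsr⟩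

theorem exists_eq_arc_of_isPreconnected [T2Space X] (hAC : ArcwiseConnected X)
    (hHU : HereditarilyUnicoherent X) {S : Set X} (hS : IsCompact S) (hSc : IsPreconnected S)
    (hpS : p ∈ S) (hSq : S ⊆ arc p q) : ∃ w ∈ S, S = arc p w := by
  rcases eq_or_ne p q with rfl | hpq
  · refine ⟨p, hpS, ?_⟩
    rw [arc_self] at hSq ⊢
    exact Subset.antisymm hSq (singleton_subset_iff.2 hpS)
  obtain ⟨f, hf, hrange, rfl, rfl⟩ := isArcWith_iff.1 (isArcWith_arc hAC hpq)
  have hT : IsPreconnected (f ⁻¹' S) := by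
    rwa [← hf.isInducing.isPreconnected_image, image_preimage_eq_of_subset (hrange ▸ hSq)]
  obtain ⟨ρ, hρS, hρ⟩ := (hS.isClosed.preimage hf.continuous).isCompact.exists_isGreatest
    ⟨0, hpS⟩
  have hTρ : f ⁻¹' S = Icc 0 ρ :=
    Subset.antisymm (fun _ hr => ⟨unitInterval.nonneg', hρ hr⟩) (hT.Icc_subset hpS hρS)
  refine ⟨f ρ, hρS, ?_⟩
  rw [arc_eq_image_Icc hAC hHU hf unitInterval.nonneg', ← hTρ,
    image_preimage_eq_of_subset (hrange ▸ hSq)]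

end DendroidArc

section Fan

variable {X : Type*} [TopologicalSpace X] {t x y : X}

theorem orderGe_two {F₀ F₁ : Set X} {p q₀ q₁ : X} (h₀ : IsArcWith F₀ p q₀)
    (h₁ : IsArcWith F₁ p q₁) (h₀₁ : F₀ ∩ F₁ = {p}) : OrderGe X p 2 := by
  refine ⟨![F₀, F₁], fun i => ?_, fun i j hij => ?_⟩
  · fin_cases i
    exacts [⟨q₀, h₀⟩, ⟨q₁, h₁⟩]
  · fin_cases i <;> fin_cases j <;> simp_all [inter_comm]

theorem orderGe_three {F₀ F₁ F₂ : Set X} {p q₀ q₁ q₂ : X} (h₀ : IsArcWith F₀ p q₀)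
    (h₁ : IsArcWith F₁ p q₁) (h₂ : IsArcWith F₂ p q₂) (h₀₁ : F₀ ∩ F₁ = {p})
    (h₀₂ : F₀ ∩ F₂ = {p}) (h₁₂ : F₁ ∩ F₂ = {p}) : OrderGe X p 3 := by
  refine ⟨![F₀, F₁, F₂], fun i => ?_, fun i j hij => ?_⟩
  · fin_cases i
    exacts [⟨q₀, h₀⟩, ⟨q₁, h₁⟩, ⟨q₂, h₂⟩]
  · fin_cases i <;> fin_cases j <;> simp_all [inter_comm]

theorem mem_ordinaryPoints_of_mem_arc (hAC : ArcwiseConnected X)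
    (hHU : HereditarilyUnicoherent X) (hram : ramificationPoints X = {t}) (hx : x ∈ arc t y)
    (hxt : x ≠ t) (hxy : x ≠ y) : x ∈ ordinaryPoints X := by
  refine ⟨orderGe_two (isArcWith_arc hAC hxt) (isArcWith_arc hAC hxy) ?_, fun h3 => hxt ?_⟩
  · rw [arc_comm hAC hHU x t]
    exact arc_inter_arc_eq_singleton hAC hHU hx
  · rw [← mem_singleton_iff, ← hram]
    exact h3

theorem mem_of_isSubcontinuum_of_arc_inter_arc_eq [T2Space X] (hAC : ArcwiseConnected X)
    (hHU : HereditarilyUnicoherent X) {a : X} {Q : Set X} (hQ : IsSubcontinuum Q) (hx : x ∈ Q)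
    (ha : a ∈ Q) (hxa : arc t x ∩ arc t a = {t}) : t ∈ Q := by
  have hK : IsSubcontinuum (arc t x ∪ arc t a) :=
    ⟨(isSubcontinuum_arc hAC t x).1.union (isSubcontinuum_arc hAC t a).1,
      (isSubcontinuum_arc hAC t x).2.union ⟨t, left_mem_arc hAC t x, left_mem_arc hAC t a⟩
        (isSubcontinuum_arc hAC t a).2⟩
  obtain ⟨z, ⟨hzQ, -⟩, hz⟩ := isPreconnected_closed_iff.1 (hHU Q _ hQ hK) _ _
    (isSubcontinuum_arc hAC t x).1.isClosed (isSubcontinuum_arc hAC t a).1.isClosed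
    inter_subset_right ⟨x, ⟨hx, .inl (right_mem_arc hAC t x)⟩, right_mem_arc hAC t x⟩
    ⟨a, ⟨ha, .inr (right_mem_arc hAC t a)⟩, right_mem_arc hAC t a⟩
  rw [hxa, mem_singleton_iff] at hz
  rwa [hz] at hzQ

theorem arc_trichotomy [T2Space X] (hAC : ArcwiseConnected X) (hHU : HereditarilyUnicoherent X)
    (hram : ramificationPoints X = {t}) (x y : X) :
    x ∈ arc t y ∨ y ∈ arc t x ∨ arc t x ∩ arc t y = {t} := by
  have hx := isSubcontinuum_arc hAC t x
  obtain ⟨w, ⟨hwx, hwy⟩, hS⟩ := exists_eq_arc_of_isPreconnected hAC hHU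
    (hx.1.inter_right (isSubcontinuum_arc hAC t y).1.isClosed)
    (hHU _ _ hx (isSubcontinuum_arc hAC t y)) ⟨left_mem_arc hAC t x, left_mem_arc hAC t y⟩
    inter_subset_left
  rcases eq_or_ne w x with rfl | hwx'
  · exact .inl hwy
  rcases eq_or_ne w y with rfl | hwy'
  · exact .inr (.inl hwx)
  rcases eq_or_ne w t with rfl | hwt
  · exact .inr (.inr (hS.trans (arc_self w)))
  -- otherwise the arcs from `w` to `t`, `x`, `y` make `w` a second ramification point
  refine absurd ?_ hwt
  rw [← mem_singleton_iff, ← hram]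
  refine orderGe_three (isArcWith_arc hAC hwt) (isArcWith_arc hAC hwx')
    (isArcWith_arc hAC hwy') ?_ ?_ ?_
  · rw [arc_comm hAC hHU w t]
    exact arc_inter_arc_eq_singleton hAC hHU hwx
  · rw [arc_comm hAC hHU w t]
    exact arc_inter_arc_eq_singleton hAC hHU hwy
  · refine Subset.antisymm (fun z hz => ?_)
      (singleton_subset_iff.2 ⟨left_mem_arc hAC w x, left_mem_arc hAC w y⟩)
    have hzS : z ∈ arc t w := hS ▸
      ⟨arc_subset_of_isSubcontinuum hAC hHU hx hwx (right_mem_arc hAC t x) hz.1,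
        arc_subset_of_isSubcontinuum hAC hHU (isSubcontinuum_arc hAC t y) hwy
          (right_mem_arc hAC t y) hz.2⟩
    exact arc_inter_arc_eq_singleton hAC hHU hwx ▸ ⟨hzS, hz.1⟩

theorem arc_inter_arc_eq_singleton_of_notMem [T2Space X] {a : X} (hAC : ArcwiseConnected X)
    (hHU : HereditarilyUnicoherent X) (hram : ramificationPoints X = {t})
    (ha : a ∉ ordinaryPoints X) {x : X} (hx : x ∉ arc t a) : arc t x ∩ arc t a = {t} := by
  rcases arc_trichotomy hAC hHU hram x a with hxa | hax | h
  · exact absurd hxa hx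
  · rcases eq_or_ne a t with rfl | hat
    · rw [arc_self, inter_eq_right.2 (singleton_subset_iff.2 (left_mem_arc hAC a x))]
    · have hax' : a ≠ x := fun h => hx (h ▸ right_mem_arc hAC t a)
      exact absurd (mem_ordinaryPoints_of_mem_arc hAC hHU hram hax hat hax') ha
  · exact h

end Fan

section Hausdorff

variable {X : Type*} [MetricSpace X] [CompactSpace X] {A : ℕ → Set X} {L : Set X} {x : X}

theorem hausdorffEDist_ne_top_of_nonempty {s s' : Set X} (hs : s.Nonempty)
    (hs' : s'.Nonempty) : hausdorffEDist s s' ≠ ⊤ :=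
  hausdorffEDist_ne_top_of_nonempty_of_bounded hs hs' (.all s) (.all s')

theorem exists_subseq_tendsto_hausdorffDist (hA : ∀ n, IsClosed (A n))
    (hAne : ∀ n, (A n).Nonempty) : ∃ L : Set X, IsClosed L ∧ L.Nonempty ∧
      ∃ φ : ℕ → ℕ, StrictMono φ ∧
        Tendsto (fun n => hausdorffDist (A (φ n)) L) atTop (𝓝 0) := by
  obtain ⟨L, φ, hφ, hL⟩ := CompactSpace.tendsto_subseq
    fun n => (⟨⟨A n, (hA n).isCompact⟩, hAne n⟩ : TopologicalSpace.NonemptyCompacts X)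
  refine ⟨L, L.isCompact.isClosed, L.nonempty, φ, hφ, ?_⟩
  simpa [Function.comp_def, NonemptyCompacts.dist_eq] using tendsto_iff_dist_tendsto_zero.1 hL

theorem exists_tendsto_of_mem_of_tendsto_hausdorffDist (hA : ∀ n, IsCompact (A n))
    (hAne : ∀ n, (A n).Nonempty) (hAL : Tendsto (fun n => hausdorffDist (A n) L) atTop (𝓝 0))
    (hx : x ∈ L) : ∃ c : ℕ → X, (∀ n, c n ∈ A n) ∧ Tendsto c atTop (𝓝 x) := by
  choose c hc hcx using fun n => (hA n).exists_infDist_eq_dist (hAne n) x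
  refine ⟨c, hc, tendsto_iff_dist_tendsto_zero.2 (squeeze_zero (fun _ => dist_nonneg)
    (fun n => ?_) hAL)⟩
  rw [dist_comm, ← hcx, hausdorffDist_comm]
  exact infDist_le_hausdorffDist_of_mem hx (hausdorffEDist_ne_top_of_nonempty ⟨x, hx⟩ (hAne n))

theorem mem_of_tendsto_of_tendsto_hausdorffDist (hL : IsClosed L) (hLne : L.Nonempty)
    (hAL : Tendsto (fun n => hausdorffDist (A n) L) atTop (𝓝 0)) {c : ℕ → X}
    (hc : ∀ n, c n ∈ A n) (hcx : Tendsto c atTop (𝓝 x)) : x ∈ L := by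
  rw [hL.mem_iff_infDist_zero hLne]
  refine le_antisymm (ge_of_tendsto' (by simpa using (tendsto_iff_dist_tendsto_zero.1 hcx).add hAL)
    fun n => ?_) infDist_nonneg
  calc infDist x L ≤ infDist (c n) L + dist x (c n) := infDist_le_infDist_add_dist
    _ ≤ dist (c n) x + hausdorffDist (A n) L := by
      rw [dist_comm, add_comm]
      gcongr
      exact infDist_le_hausdorffDist_of_mem (hc n)
        (hausdorffEDist_ne_top_of_nonempty ⟨c n, hc n⟩ hLne)

theorem isPreconnected_of_tendsto_hausdorffDist (hA : ∀ n, IsPreconnected (A n))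
    (hAne : ∀ n, (A n).Nonempty) (hL : IsClosed L)
    (hAL : Tendsto (fun n => hausdorffDist (A n) L) atTop (𝓝 0)) :
    IsPreconnected L := by
  rw [isPreconnected_closed_iff]
  intro F G hF hG hLFG ⟨u, huL, huF⟩ ⟨v, hvL, hvG⟩
  by_contra hFG
  have hdisj : Disjoint (L ∩ F) (L ∩ G) :=
    disjoint_left.2 fun z hzF hzG => hFG ⟨z, hzF.1, hzF.2, hzG.2⟩
  obtain ⟨δ, hδ, hδdisj⟩ := hdisj.exists_thickenings (hL.inter hF).isCompact (hL.inter hG)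
  obtain ⟨n, hn⟩ := (hAL.eventually (gt_mem_nhds hδ)).exists
  have hLne : L.Nonempty := ⟨u, huL⟩
  have hcover : A n ⊆ thickening δ (L ∩ F) ∪ thickening δ (L ∩ G) := by
    intro z hz
    obtain ⟨y, hyL, hzy⟩ := exists_dist_lt_of_hausdorffDist_lt hz hn
      (hausdorffEDist_ne_top_of_nonempty ⟨z, hz⟩ hLne)
    rcases hLFG hyL with hyF | hyG
    exacts [.inl (mem_thickening_iff.2 ⟨y, ⟨hyL, hyF⟩, hzy⟩),
      .inr (mem_thickening_iff.2 ⟨y, ⟨hyL, hyG⟩, hzy⟩)]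
  have hmeet : ∀ {K : Set X}, ∀ y ∈ L ∩ K, (A n ∩ thickening δ (L ∩ K)).Nonempty := by
    intro K y hy
    obtain ⟨z, hz, hyz⟩ := exists_dist_lt_of_hausdorffDist_lt hy.1
      (hausdorffDist_comm (s := A n) ▸ hn) (hausdorffEDist_ne_top_of_nonempty hLne (hAne n))
    exact ⟨z, hz, mem_thickening_iff.2 ⟨y, hy, by rwa [dist_comm]⟩⟩
  obtain ⟨z, -, hzF, hzG⟩ := hA n _ _ isOpen_thickening isOpen_thickening hcover
    (hmeet u ⟨huL, huF⟩) (hmeet v ⟨hvL, hvG⟩)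
  exact disjoint_left.1 hδdisj hzF hzG

end Hausdorff

section SmoothFan

variable {X : Type*} [MetricSpace X] [CompactSpace X] {t a : X}

theorem mem_arc_of_smoothAt (hAC : ArcwiseConnected X) {p q : X} (hp : SmoothAt X t p)
    {pk qk : ℕ → X} (hpk : Tendsto pk atTop (𝓝 p)) (hqk : ∀ k, qk k ∈ arc t (pk k))
    (hq : Tendsto qk atTop (𝓝 q)) : q ∈ arc t p :=
  mem_of_tendsto_of_tendsto_hausdorffDist (isSubcontinuum_arc hAC t p).1.isClosed
    ⟨t, left_mem_arc hAC t p⟩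
    (hp pk _ _ hpk (fun k => isArcOrPt_arc hAC t (pk k)) (isArcOrPt_arc hAC t p)) hqk hq

theorem notMem_of_tendsto_hausdorffDist_arc (hAC : ArcwiseConnected X)
    (hHU : HereditarilyUnicoherent X) (hram : ramificationPoints X = {t})
    (hsm : ordinaryPoints X ⊆ smoothSet X t) {β : ℕ → X} (hβ : Tendsto β atTop (𝓝 a))
    {L : Set X} (hL : Tendsto (fun n => hausdorffDist (arc t (β n)) L) atTop (𝓝 0)) {x : X}
    (hxt : x ≠ t) (hxa : arc t x ∩ arc t a = {t}) : x ∉ L := by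
  intro hxL
  obtain ⟨ξ, hξ, hξx⟩ := exists_tendsto_of_mem_of_tendsto_hausdorffDist
    (fun n => (isSubcontinuum_arc hAC t (β n)).1) (fun n => ⟨t, left_mem_arc hAC t _⟩) hL hxL
  -- the parts `ξₙ βₙ` of the arcs `t βₙ` accumulate on a continuum `Q` through `x` and `a`
  obtain ⟨Q, hQ, hQne, φ, hφ, hQlim⟩ := exists_subseq_tendsto_hausdorffDist
    (fun n => (isSubcontinuum_arc hAC (ξ n) (β n)).1.isClosed)
    (fun n => ⟨ξ n, left_mem_arc hAC _ _⟩)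
  have hQc : IsSubcontinuum Q := ⟨hQ.isCompact, hQne,
    isPreconnected_of_tendsto_hausdorffDist (fun n => (isSubcontinuum_arc hAC _ _).2.2)
      (fun n => ⟨ξ (φ n), left_mem_arc hAC _ _⟩) hQ hQlim⟩
  have hxQ : x ∈ Q := mem_of_tendsto_of_tendsto_hausdorffDist hQ hQne hQlim
    (fun n => left_mem_arc hAC _ _) (hξx.comp hφ.tendsto_atTop)
  have haQ : a ∈ Q := mem_of_tendsto_of_tendsto_hausdorffDist hQ hQne hQlim
    (fun n => right_mem_arc hAC _ _) (hβ.comp hφ.tendsto_atTop)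
  have htx : arc t x ⊆ Q := arc_subset_of_isSubcontinuum hAC hHU hQc
    (mem_of_isSubcontinuum_of_arc_inter_arc_eq hAC hHU hQc hxQ haQ hxa) hxQ
  obtain ⟨p, hp, hpt, hpx⟩ := exists_mem_arc_ne_ne hAC hxt.symm
  obtain ⟨π, hπ, hπp⟩ := exists_tendsto_of_mem_of_tendsto_hausdorffDist
    (fun n => (isSubcontinuum_arc hAC _ _).1) (fun n => ⟨ξ (φ n), left_mem_arc hAC _ _⟩) hQlim
    (htx hp)
  have hxp : x ∈ arc t p :=
    mem_arc_of_smoothAt hAC (hsm (mem_ordinaryPoints_of_mem_arc hAC hHU hram hp hpt hpx)) hπp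
      (fun n => mem_arc_of_mem_arc_of_mem_arc hAC hHU (hξ (φ n)) (hπ n))
      (hξx.comp hφ.tendsto_atTop)
  exact hpx (eq_of_mem_arc_of_mem_arc hAC hHU hp hxp)

theorem eq_arc_of_tendsto_hausdorffDist (hAC : ArcwiseConnected X)
    (hHU : HereditarilyUnicoherent X) (hram : ramificationPoints X = {t})
    (hsm : ordinaryPoints X ⊆ smoothSet X t) (ha : a ∉ ordinaryPoints X) {β : ℕ → X}
    (hβ : Tendsto β atTop (𝓝 a)) {L : Set X} (hL : IsClosed L) (hLne : L.Nonempty)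
    (hβL : Tendsto (fun n => hausdorffDist (arc t (β n)) L) atTop (𝓝 0)) : L = arc t a := by
  have hLc : IsSubcontinuum L := ⟨hL.isCompact, hLne,
    isPreconnected_of_tendsto_hausdorffDist (fun n => (isSubcontinuum_arc hAC _ _).2.2)
      (fun n => ⟨t, left_mem_arc hAC _ _⟩) hL hβL⟩
  have htL : t ∈ L := mem_of_tendsto_of_tendsto_hausdorffDist hL hLne hβL
    (fun n => left_mem_arc hAC _ _) tendsto_const_nhds
  have haL : a ∈ L := mem_of_tendsto_of_tendsto_hausdorffDist hL hLne hβL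
    (fun n => right_mem_arc hAC _ _) hβ
  refine Subset.antisymm (fun x hxL => ?_) (arc_subset_of_isSubcontinuum hAC hHU hLc htL haL)
  by_contra hx
  exact notMem_of_tendsto_hausdorffDist_arc hAC hHU hram hsm hβ hβL
    (fun h => hx (by rw [h]; exact left_mem_arc hAC t a))
    (arc_inter_arc_eq_singleton_of_notMem hAC hHU hram ha hx) hxL

theorem smoothAt_of_notMem_ordinaryPoints (hAC : ArcwiseConnected X)
    (hHU : HereditarilyUnicoherent X) (hram : ramificationPoints X = {t})
    (hsm : ordinaryPoints X ⊆ smoothSet X t) (ha : a ∉ ordinaryPoints X) : SmoothAt X t a := by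
  intro α A B hα hA hB
  obtain rfl : A = fun n => arc t (α n) := funext fun n => (hA n).eq_arc hAC hHU
  obtain rfl := hB.eq_arc hAC hHU
  refine tendsto_of_subseq_tendsto fun ns hns => ?_
  obtain ⟨L, hL, hLne, φ, hφ, hφL⟩ := exists_subseq_tendsto_hausdorffDist
    (fun n => (isSubcontinuum_arc hAC t (α (ns n))).1.isClosed)
    (fun n => ⟨t, left_mem_arc hAC _ _⟩)
  refine ⟨φ, ?_⟩
  rwa [← eq_arc_of_tendsto_hausdorffDist hAC hHU hram hsm ha
    ((hα.comp hns).comp hφ.tendsto_atTop) hL hLne hφL]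

end SmoothFan

/-- If `X` is a fan with `O(X) ⊆ S(X)`, then `X` is smooth. -/
theorem fan_smooth_of_ordinary_subset_smoothSet
    (X : Type*) [MetricSpace X] (t : X)
    (hX : IsFanWithTop X t)
    (h : ordinaryPoints X ⊆ smoothSet X t) :
    IsSmoothFanWithTop X t := by
  refine ⟨hX, eq_univ_of_forall fun a => ?_⟩
  obtain ⟨⟨_, -, hAC, hHU⟩, hram⟩ := hX
  by_cases ha : a ∈ ordinaryPoints X
  · exact h ha
  · exact smoothAt_of_notMem_ordinaryPoints hAC hHU hram h ha

end FansHomogeneity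
end
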